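/- Let a, c, b₁,…,bₙ be interactions over act(P) ∪ fire(P) ∪ inhib(P) with firesup(a) = ∅, and let t₁,…,tₙ be causal interaction trees. Then c → (a → ⊕ᵢ₌₁ⁿ (bᵢ → tᵢ)) ∼ c → ⊕ᵢ₌₁ⁿ ((a ∪ bᵢ) → tᵢ). -/

import Mathlib

/-- Typed ports: activation, firing and negative copies of the port set `P`. -/
inductive TPort (P : Type) : Type
  | act : P → TPort P
  | fire : P → TPort P
  | inhib : P → TPort P

/-- Firing support of an interaction. -/
def firesup {P : Type} (a : Set (TPort P)) : Set P := {p | TPort.fire p ∈ a}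

/-- Activation support of an interaction. -/
def actsup {P : Type} (a : Set (TPort P)) : Set P := {p | TPort.act p ∈ a}

/-- Negative support of an interaction. -/
def negsup {P : Type} (a : Set (TPort P)) : Set P := {p | TPort.inhib p ∈ a}

/-- A behaviour: an LTS with an offer predicate; the transitions labelled by the
empty interaction are exactly the self-loops, and every port occurring on a
transition from a state is offered in that state. -/
structure Behaviour (P : Type) : Type 1 where
  State : Type
  ports : Set P
  tr : State → Set P → State → Prop
  off : State → P → Prop
  tr_sub : ∀ {q a q'}, tr q a q' → a ⊆ ports
  tr_empty : ∀ q q', tr q ∅ q' ↔ q' = q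
  off_of_tr : ∀ {q a q' p}, tr q a q' → p ∈ a → off q p

/-- Transition relation of the composition `γ(B₁,…,Bₙ)` (including the empty
self-loops, present in every behaviour by the standing assumption). -/
def compTr {P ι : Type} (B : ι → Behaviour P) (γ : Set (Set (TPort P)))
    (q : ∀ i, (B i).State) (b : Set P) (q' : ∀ i, (B i).State) : Prop :=
  (b = ∅ ∧ q' = q) ∨
  ∃ a ∈ γ, b = firesup a ∧ ∀ i,
    (B i).tr (q i) (firesup a ∩ (B i).ports) (q' i) ∧
    (∀ p ∈ actsup a ∩ (B i).ports, (B i).off (q i) p) ∧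
    (∀ p ∈ negsup a ∩ (B i).ports, ¬ (B i).off (q i) p)

/-- Offer predicate of the composition `γ(B₁,…,Bₙ)`. -/
def compOff {P ι : Type} (B : ι → Behaviour P)
    (q : ∀ i, (B i).State) (p : P) : Prop :=
  ∃ i, p ∈ (B i).ports ∧ (B i).off (q i) p

/-- Two sets of interactions are equivalent iff they induce the same composed
behaviour on every finite family of behaviours whose port sets partition `P`. -/
def EquivInter (P : Type) (γ₁ γ₂ : Set (Set (TPort P))) : Prop :=
  ∀ (ι : Type) [Finite ι] (B : ι → Behaviour P),
    Pairwise (fun i j => Disjoint (B i).ports (B j).ports) →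
    (⋃ i, (B i).ports) = Set.univ →
    compTr B γ₁ = compTr B γ₂

/-- Causal interaction trees over the typed ports of `P`
(`zero` is the constant 0; the constant 1 is the empty interaction `∅`). -/
inductive CITree (P : Type) : Type
  | zero : CITree P
  | node : Set (TPort P) → CITree P
  | arrow : Set (TPort P) → CITree P → CITree P
  | par : CITree P → CITree P → CITree P

/-- Interaction semantics of causal interaction trees. -/
def sem {P : Type} : CITree P → Set (Set (TPort P))
  | CITree.zero => ∅
  | CITree.node a => {a}
  | CITree.arrow a t => {a} ∪ {c | ∃ b ∈ sem t, c = a ∪ b}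
  | CITree.par t₁ t₂ =>
      sem t₁ ∪ sem t₂ ∪ {c | ∃ b₁ ∈ sem t₁, ∃ b₂ ∈ sem t₂, c = b₁ ∪ b₂}

/-- Equivalence of causal interaction trees. -/
def treeEquiv {P : Type} (t₁ t₂ : CITree P) : Prop :=
  EquivInter P (sem t₁) (sem t₂)

/-- `n`-ary parallel composition `⊕` of a list of trees. -/
def bigPar {P : Type} : List (CITree P) → CITree P
  | [] => CITree.zero
  | t :: ts => CITree.par t (bigPar ts)

/-
Unfolding the semantics, `a ∪ ·` distributes over `→` and `⊕`, so the two trees denote the same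
set of interactions except that the left one also contains `c ∪ a`. Since `a` fires nothing,
`c ∪ a` fires exactly what `c` fires under stronger enabling conditions, so every
transition it induces is already induced by `c`.
-/

lemma firesup_union {P : Type} (a b : Set (TPort P)) :
    firesup (a ∪ b) = firesup a ∪ firesup b :=
  rfl

lemma compTr_insert_of_subset {P ι : Type} (B : ι → Behaviour P) {γ : Set (Set (TPort P))}
    {d e : Set (TPort P)} (hd : d ∈ γ) (hde : d ⊆ e) (hfire : firesup e = firesup d) :
    compTr B (insert e γ) = compTr B γ := by
  funext q b q'
  refine propext ⟨?_, fun h => h.imp_right fun ⟨a, ha, rest⟩ => ⟨a, Or.inr ha, rest⟩⟩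
  rintro (hidle | ⟨a, rfl | ha, hb, hstep⟩)
  · exact Or.inl hidle
  · refine Or.inr ⟨d, hd, hfire ▸ hb, fun i => ?_⟩
    obtain ⟨htr, hact, hneg⟩ := hstep i
    exact ⟨hfire ▸ htr, fun p hp => hact p ⟨hde hp.1, hp.2⟩,
      fun p hp => hneg p ⟨hde hp.1, hp.2⟩⟩
  · exact Or.inr ⟨a, ha, hb, hstep⟩

lemma sem_arrow {P : Type} (a : Set (TPort P)) (t : CITree P) :
    sem (CITree.arrow a t) = insert a ((a ∪ ·) '' sem t) := by
  ext x
  simp [sem, eq_comm]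

lemma sem_par {P : Type} (u v : CITree P) :
    sem (CITree.par u v) = sem u ∪ sem v ∪ Set.image2 (· ∪ ·) (sem u) (sem v) := by
  ext x
  simp [sem, eq_comm]

lemma sem_arrow_union {P : Type} (a b : Set (TPort P)) (t : CITree P) :
    sem (CITree.arrow (a ∪ b) t) = (a ∪ ·) '' sem (CITree.arrow b t) := by
  simp only [sem_arrow, Set.image_insert_eq, Set.image_image, Set.union_assoc]

lemma sem_par_eq_image {P : Type} (a : Set (TPort P)) {u₁ u₂ v₁ v₂ : CITree P}
    (hu : sem u₂ = (a ∪ ·) '' sem u₁) (hv : sem v₂ = (a ∪ ·) '' sem v₁) :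
    sem (CITree.par u₂ v₂) = (a ∪ ·) '' sem (CITree.par u₁ v₁) := by
  rw [sem_par, sem_par, hu, hv, Set.image_union, Set.image_union,
    Set.image_image2_distrib fun x y => Set.union_union_distrib_left a x y]

lemma sem_bigPar_ofFn_eq_image {P : Type} (a : Set (TPort P)) :
    ∀ {n : ℕ} (u v : Fin n → CITree P), (∀ i, sem (v i) = (a ∪ ·) '' sem (u i)) →
      sem (bigPar (List.ofFn v)) = (a ∪ ·) '' sem (bigPar (List.ofFn u))
  | 0, _, _, _ => by simp [bigPar, sem]
  | _ + 1, u, v, h => by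
    rw [List.ofFn_succ, List.ofFn_succ]
    exact sem_par_eq_image a (h 0)
      (sem_bigPar_ofFn_eq_image a (fun i => u i.succ) (fun i => v i.succ) fun i => h i.succ)

lemma sem_arrow_arrow_of_eq_image {P : Type} (c a : Set (TPort P)) {s s' : CITree P}
    (h : sem s' = (a ∪ ·) '' sem s) :
    sem (CITree.arrow c (CITree.arrow a s)) = insert (c ∪ a) (sem (CITree.arrow c s')) := by
  rw [sem_arrow, sem_arrow, sem_arrow, h, Set.image_insert_eq, Set.insert_comm]

/-- If `firesup a = ∅`, then
`c → (a → ⊕ᵢ (bᵢ → tᵢ)) ∼ c → ⊕ᵢ ((a ∪ bᵢ) → tᵢ)`. -/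
theorem stmt9 {P : Type} (n : ℕ) (c a : Set (TPort P)) (ha : firesup a = ∅)
    (b : Fin n → Set (TPort P)) (t : Fin n → CITree P) :
    treeEquiv
      (CITree.arrow c (CITree.arrow a
        (bigPar (List.ofFn fun i => CITree.arrow (b i) (t i)))))
      (CITree.arrow c
        (bigPar (List.ofFn fun i => CITree.arrow (a ∪ b i) (t i)))) := by
  intro ι _ B _ _
  have hsem := sem_arrow_arrow_of_eq_image c a
    (sem_bigPar_ofFn_eq_image a _ _ fun i => sem_arrow_union a (b i) (t i))
  have hfire : firesup (c ∪ a) = firesup c := by rw [firesup_union, ha, Set.union_empty]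
  rw [hsem]
  exact compTr_insert_of_subset B (by simp [sem_arrow]) Set.subset_union_left hfire
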